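/- arXiv:math/0307350 — 2 statements merged into one kernel-verified Lean document; each statement's English description precedes it below -/
import Mathlib

section
/- Let A ∈ ℤ^{d×n}, b ∈ ℤ^d, and let G be a Gröbner basis of the toric ideal I_A with respect to the term order ≺_W induced by a cost matrix W refining a cost vector c. If x^u is a feasible monomial (A·u = b, u ≥ 0) and x^v is its normal form modulo G, then v is feasible (A·v = b) and c·v ≤ c·u' for every u' ∈ ℕ^n with A·u' = b. -/
open MvPolynomial

/-- The toric ideal of an integer `d × n` matrix `A`. -/
noncomputable def toricIdeal (k : Type*) [Field k] {d n : ℕ} (A : Matrix (Fin d) (Fin n) ℤ) :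
    Ideal (MvPolynomial (Fin n) k) :=
  Ideal.span {f | ∃ u v : Fin n → ℕ,
    A.mulVec (fun i => (u i : ℤ)) = A.mulVec (fun i => (v i : ℤ)) ∧
    f = monomial (Finsupp.equivFunOnFinite.symm u) 1
      - monomial (Finsupp.equivFunOnFinite.symm v) 1}

/-- `w · α` for an integer weight vector `w` and an exponent vector `α ∈ ℕ^n`. -/
def wdot {n : ℕ} (w : Fin n → ℤ) (a : Fin n → ℕ) : ℤ := ∑ i, w i * (a i : ℤ)

/-- The matrix term order `≺_W`: `α ≺_W β` iff `Wα` is lexicographically smaller than `Wβ`. -/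
def precW {n : ℕ} (W : Matrix (Fin n) (Fin n) ℤ) (a b : Fin n → ℕ) : Prop :=
  ∃ j : Fin n, (∀ i < j, wdot (W i) a = wdot (W i) b) ∧ wdot (W j) a < wdot (W j) b

noncomputable def phi (k : Type*) [Field k] {d n : ℕ} (A : Matrix (Fin d) (Fin n) ℤ) :
    MvPolynomial (Fin n) k →ₐ[k] AddMonoidAlgebra k (Fin d → ℤ) :=
  aeval (fun i => AddMonoidAlgebra.single (fun j => A j i) 1)

lemma phi_monomial (k : Type*) [Field k] {d n : ℕ} (A : Matrix (Fin d) (Fin n) ℤ)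
    (u : Fin n → ℕ) :
    phi k A (monomial (Finsupp.equivFunOnFinite.symm u) (1 : k)) =
      AddMonoidAlgebra.single (A.mulVec (fun i => (u i : ℤ))) 1 := by
  rw [phi, aeval_monomial, map_one, one_mul, Finsupp.prod_pow]
  simp only [Finsupp.coe_equivFunOnFinite_symm, AddMonoidAlgebra.single_pow, one_pow]
  rw [AddMonoidAlgebra.prod_single, Finset.prod_const_one]
  congr 1
  funext j
  simp [Matrix.mulVec, dotProduct, mul_comm]

lemma mem_imp_mulVec_eq (k : Type*) [Field k] {d n : ℕ} (A : Matrix (Fin d) (Fin n) ℤ)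
    (u v : Fin n → ℕ)
    (h : monomial (Finsupp.equivFunOnFinite.symm u) 1
      - monomial (Finsupp.equivFunOnFinite.symm v) (1 : k) ∈ toricIdeal k A) :
    A.mulVec (fun i => (u i : ℤ)) = A.mulVec (fun i => (v i : ℤ)) := by
  have hker : toricIdeal k A ≤ RingHom.ker (phi k A).toRingHom := by
    rw [toricIdeal, Ideal.span_le]
    rintro f ⟨a, c, hac, rfl⟩
    simp only [SetLike.mem_coe, RingHom.mem_ker, AlgHom.toRingHom_eq_coe, RingHom.coe_coe,
      map_sub, phi_monomial, hac, sub_self]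
  have := hker h
  rw [RingHom.mem_ker] at this
  simp only [AlgHom.toRingHom_eq_coe, RingHom.coe_coe, map_sub, phi_monomial, sub_eq_zero] at this
  by_contra hne
  have := AddMonoidAlgebra.single_inj.mp this
  rcases this with ⟨h1, _⟩ | ⟨h1, _⟩
  · exact hne h1
  · exact one_ne_zero h1

/-- Integer programming via toric Gröbner bases: let the term order `≺_W` refine the
cost vector `c = W 0` (the first row of `W`).  If `u` is feasible (`A·u = b`) and `x^v`
is the normal form of `x^u`, i.e. the unique `≺_W`-minimal monomial with
`x^u - x^v ∈ I_A`, then `v` is an optimal solution of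
`min{c·x : A·x = b, x ∈ ℕ^n}`: `v` is feasible and `c·v ≤ c·u'` for every feasible `u'`. -/
theorem normal_form_solves_integer_program
    (k : Type*) [Field k] (d n : ℕ) (hn : 0 < n)
    (A : Matrix (Fin d) (Fin n) ℤ) (b : Fin d → ℤ)
    (W : Matrix (Fin n) (Fin n) ℤ)
    (horder : ∀ a a' : Fin n → ℕ, a ≠ a' → precW W a a' ∨ precW W a' a)
    (u v : Fin n → ℕ)
    (hfeas : A.mulVec (fun i => (u i : ℤ)) = b)
    (hnf : (monomial (Finsupp.equivFunOnFinite.symm u) 1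
            - monomial (Finsupp.equivFunOnFinite.symm v) (1 : k) ∈ toricIdeal k A) ∧
          ∀ w : Fin n → ℕ, w ≠ v →
            (monomial (Finsupp.equivFunOnFinite.symm u) 1
              - monomial (Finsupp.equivFunOnFinite.symm w) (1 : k) ∈ toricIdeal k A) →
            precW W v w) :
    A.mulVec (fun i => (v i : ℤ)) = b ∧
    ∀ u' : Fin n → ℕ, A.mulVec (fun i => (u' i : ℤ)) = b →
      wdot (W ⟨0, hn⟩) v ≤ wdot (W ⟨0, hn⟩) u' := by
  
  obtain ⟨hmem, hmin⟩ := hnf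
  have huv := mem_imp_mulVec_eq k A u v hmem
  refine ⟨huv ▸ hfeas, fun u' hfeas' => ?_⟩
  by_cases hne : u' = v
  · subst hne; exact le_refl _
  · have hmem' : monomial (Finsupp.equivFunOnFinite.symm u) 1
        - monomial (Finsupp.equivFunOnFinite.symm u') (1 : k) ∈ toricIdeal k A := by
      apply Ideal.subset_span
      exact ⟨u, u', by rw [hfeas, hfeas'], rfl⟩
    obtain ⟨j, hje, hjl⟩ := hmin u' hne hmem'
    rcases eq_or_ne j ⟨0, hn⟩ with rfl | hj0
    · exact le_of_lt hjl
    · have hjv : j.val ≠ 0 := fun h => hj0 (Fin.ext h)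
      have : (⟨0, hn⟩ : Fin n) < j := by
        simp [Fin.lt_def, Nat.pos_of_ne_zero hjv]
      exact le_of_eq (hje _ this)
end

section
/- Let A ∈ ℤ^{d×n} with ker(A) ∩ ℕ^n = {0} (so every fiber P(b) = {x ∈ ℕ^n : Ax = b} is finite). Let M ⊆ ker(A) ∩ ℤ^n be the set of vectors u - v over all binomials x^u - x^v in a universal Gröbner basis of I_A. Then for every b ∈ ℤ^d, the graph G_b on vertex set P(b) with edges {y, z} whenever y - z ∈ ±M is connected, i.e., M is a Markov basis for A. -/
/-!
Fix the lexicographic term order on `ℕ^n`. If `y ≠ z` lie in the same fiber with `z <lex y`,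
the binomial `x^y - x^z` lies in `I_A` with leading exponent `y`, so some binomial `x^μ - x^ν`
of the Gröbner basis has `μ ≤ y` and `ν <lex μ`. The move `y ↦ y - μ + ν` stays in the fiber
and strictly lowers `y` lexicographically; since the lexicographic order on `ℕ^n` is a
well-order, every point of the fiber is connected to its lexicographic minimum.
-/

open MvPolynomial

/-- `μ` is the `≺_W`-leading exponent of the polynomial `f`. -/
def IsLeadExponent {k : Type*} [Field k] {n : ℕ} (W : Matrix (Fin n) (Fin n) ℤ)
    (f : MvPolynomial (Fin n) k) (μ : Fin n → ℕ) : Prop :=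
  Finsupp.equivFunOnFinite.symm μ ∈ f.support ∧
    ∀ ν ∈ f.support, ν ≠ Finsupp.equivFunOnFinite.symm μ →
      precW W (Finsupp.equivFunOnFinite ν) μ

/-- `B` is a Gröbner basis of `I` with respect to `≺_W`. -/
def IsGroebnerBasis {k : Type*} [Field k] {n : ℕ} (W : Matrix (Fin n) (Fin n) ℤ)
    (B : Set (MvPolynomial (Fin n) k)) (I : Ideal (MvPolynomial (Fin n) k)) : Prop :=
  ↑B ⊆ (I : Set (MvPolynomial (Fin n) k)) ∧
  ∀ f ∈ I, f ≠ 0 → ∃ g ∈ B, ∃ μg μf : Fin n → ℕ,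
    IsLeadExponent W g μg ∧ IsLeadExponent W f μf ∧ ∀ i, μg i ≤ μf i

/-- `B` is a universal Gröbner basis of `I`: a Gröbner basis for every term order. -/
def IsUniversalGroebnerBasis {k : Type*} [Field k] {n : ℕ}
    (B : Set (MvPolynomial (Fin n) k)) (I : Ideal (MvPolynomial (Fin n) k)) : Prop :=
  ∀ W : Matrix (Fin n) (Fin n) ℤ,
    (∀ a b : Fin n → ℕ, a ≠ b → precW W a b ∨ precW W b a) →
    IsGroebnerBasis W B I

open Matrix Relation

theorem Relation.reflTransGen_of_forall_exists_lt {α β : Type*} [LinearOrder β]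
    [WellFoundedLT β] {r : α → α → Prop} [Std.Symm r] {S : Set α} (f : α → β)
    (hf : S.InjOn f) (h : ∀ y ∈ S, ∀ z ∈ S, f z < f y → ∃ y' ∈ S, r y y' ∧ f y' < f y)
    {y z : α} (hy : y ∈ S) (hz : z ∈ S) :
    ReflTransGen (fun p q => p ∈ S ∧ q ∈ S ∧ r p q) y z := by
  have hwf : WellFounded (InvImage (· < ·) f) := InvImage.wf f wellFounded_lt
  obtain ⟨m, hmS, hmin⟩ := hwf.has_min S ⟨y, hy⟩
  have to_min : ∀ x ∈ S, ReflTransGen (fun p q => p ∈ S ∧ q ∈ S ∧ r p q) x m := by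
    intro x
    induction x using hwf.induction with
    | _ x ih =>
      intro hx
      rcases eq_or_ne x m with rfl | hxm
      · exact .refl
      have hmx : f m < f x :=
        lt_of_le_of_ne (not_lt.1 (hmin x hx)) fun hfx => hxm (hf hx hmS hfx.symm)
      obtain ⟨x', hx'S, hxx', hx'x⟩ := h x hx m hmS hmx
      exact .head ⟨hx, hx'S, hxx'⟩ (ih x' hx'x hx'S)
  have : Std.Symm (fun p q => p ∈ S ∧ q ∈ S ∧ r p q) :=
    ⟨fun _ _ ⟨hp, hq, hpq⟩ => ⟨hq, hp, Std.Symm.symm _ _ hpq⟩⟩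
  exact (to_min y hy).trans (Std.Symm.symm _ _ (to_min z hz))

section Lex

variable {n : ℕ}

theorem precW_one_iff (a b : Fin n → ℕ) : precW 1 a b ↔ toLex a < toLex b := by
  have hdot : ∀ (i : Fin n) (c : Fin n → ℕ), wdot ((1 : Matrix (Fin n) (Fin n) ℤ) i) c = c i := by
    simp [wdot, Matrix.one_apply, ite_mul]
  simp only [precW, hdot, Nat.cast_inj, Nat.cast_lt]
  rfl

theorem precW_one_total (a b : Fin n → ℕ) (hab : a ≠ b) : precW 1 a b ∨ precW 1 b a := by
  rw [precW_one_iff, precW_one_iff]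
  exact lt_or_gt_of_ne (toLex.injective.ne hab)

theorem toLex_tsub_add_lt {y μ ν : Fin n → ℕ} (hμ : μ ≤ y) (hνμ : toLex ν < toLex μ) :
    toLex (y - μ + ν) < toLex y := by
  have key : toLex (y - μ + ν) + toLex μ < toLex y + toLex μ := by
    calc toLex (y - μ + ν) + toLex μ = toLex y + toLex ν := by
          rw [← toLex_add, ← toLex_add, add_right_comm, tsub_add_cancel_of_le hμ]
      _ < toLex y + toLex μ := (add_lt_add_iff_left _).2 hνμ
  exact lt_of_add_lt_add_right key

end Lex

section Toric

variable (k : Type*) [Field k] {d n : ℕ}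

noncomputable def binomial (u v : Fin n → ℕ) : MvPolynomial (Fin n) k :=
  monomial (Finsupp.equivFunOnFinite.symm u) 1 - monomial (Finsupp.equivFunOnFinite.symm v) 1

/-- Realises the `ℤ^d`-grading `deg x_i = A e_i` under which `I_A` is homogeneous. -/
noncomputable def toricGrading (A : Matrix (Fin d) (Fin n) ℤ) :
    MvPolynomial (Fin n) k →ₐ[k] AddMonoidAlgebra k (Fin d → ℤ) :=
  aeval fun i => AddMonoidAlgebra.single (fun j => A j i) 1

variable {k}

theorem binomial_mem_toricIdeal {A : Matrix (Fin d) (Fin n) ℤ} {u v : Fin n → ℕ}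
    (h : A *ᵥ (fun i => (u i : ℤ)) = A *ᵥ (fun i => (v i : ℤ))) :
    binomial k u v ∈ toricIdeal k A :=
  Ideal.subset_span ⟨u, v, h, rfl⟩

theorem toricGrading_monomial (A : Matrix (Fin d) (Fin n) ℤ) (u : Fin n → ℕ) :
    toricGrading k A (monomial (Finsupp.equivFunOnFinite.symm u) 1) =
      AddMonoidAlgebra.single (A *ᵥ (fun i => (u i : ℤ))) 1 := by
  rw [toricGrading, aeval_monomial, map_one, one_mul, Finsupp.prod_fintype _ _ fun _ => pow_zero _]
  simp only [AddMonoidAlgebra.single_pow, one_pow, Finsupp.coe_equivFunOnFinite_symm,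
    AddMonoidAlgebra.prod_single, Finset.prod_const_one]
  congr 1
  funext j
  simp [Matrix.mulVec, dotProduct, Finset.sum_apply, mul_comm]

theorem toricGrading_binomial (A : Matrix (Fin d) (Fin n) ℤ) (u v : Fin n → ℕ) :
    toricGrading k A (binomial k u v) =
      AddMonoidAlgebra.single (A *ᵥ (fun i => (u i : ℤ))) 1
        - AddMonoidAlgebra.single (A *ᵥ (fun i => (v i : ℤ))) 1 := by
  rw [binomial, map_sub, toricGrading_monomial, toricGrading_monomial]

theorem toricIdeal_le_ker_toricGrading (A : Matrix (Fin d) (Fin n) ℤ) :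
    toricIdeal k A ≤ RingHom.ker (toricGrading k A) := by
  rw [toricIdeal, Ideal.span_le]
  rintro _ ⟨u, v, huv, rfl⟩
  rw [SetLike.mem_coe, RingHom.mem_ker]
  exact (toricGrading_binomial A u v).trans (by rw [huv, sub_self])

theorem mulVec_eq_of_binomial_mem_toricIdeal {A : Matrix (Fin d) (Fin n) ℤ} {u v : Fin n → ℕ}
    (h : binomial k u v ∈ toricIdeal k A) :
    A *ᵥ (fun i => (u i : ℤ)) = A *ᵥ (fun i => (v i : ℤ)) := by
  have h0 := toricIdeal_le_ker_toricGrading A h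
  rw [RingHom.mem_ker, toricGrading_binomial, sub_eq_zero] at h0
  exact AddMonoidAlgebra.single_left_injective one_ne_zero h0

theorem coeff_binomial (u v w : Fin n → ℕ) :
    coeff (Finsupp.equivFunOnFinite.symm w) (binomial k u v) =
      (if u = w then 1 else 0) - (if v = w then 1 else 0) := by
  simp only [binomial, coeff_sub, coeff_monomial, EmbeddingLike.apply_eq_iff_eq]

theorem mem_support_binomial {u v : Fin n → ℕ} {ν : Fin n →₀ ℕ} :
    ν ∈ (binomial k u v).support ↔ u ≠ v ∧ (ν = Finsupp.equivFunOnFinite.symm u ∨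
      ν = Finsupp.equivFunOnFinite.symm v) := by
  obtain ⟨w, rfl⟩ := Finsupp.equivFunOnFinite.symm.surjective ν
  rw [mem_support_iff, coeff_binomial]
  simp only [EmbeddingLike.apply_eq_iff_eq]
  by_cases huv : u = v
  · simp [huv]
  · by_cases hu : u = w <;> by_cases hv : v = w <;> simp_all [eq_comm]

theorem binomial_ne_zero {u v : Fin n → ℕ} (huv : u ≠ v) : binomial k u v ≠ 0 := fun h0 => by
  simpa [h0] using (mem_support_binomial (k := k)).2 ⟨huv, .inl rfl⟩

theorem IsLeadExponent.binomial {W : Matrix (Fin n) (Fin n) ℤ} {u v μ : Fin n → ℕ}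
    (h : IsLeadExponent W (binomial k u v) μ) :
    (μ = u ∧ precW W v u) ∨ (μ = v ∧ precW W u v) := by
  obtain ⟨huv, hμ⟩ := mem_support_binomial.1 h.1
  simp only [EmbeddingLike.apply_eq_iff_eq] at hμ
  rcases hμ with rfl | rfl
  · refine .inl ⟨rfl, ?_⟩
    simpa using h.2 _ (mem_support_binomial.2 ⟨huv, .inr rfl⟩) (by simpa using huv.symm)
  · refine .inr ⟨rfl, ?_⟩
    simpa using h.2 _ (mem_support_binomial.2 ⟨huv, .inl rfl⟩) (by simpa using huv)

end Toric

section Moves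

variable {d n : ℕ}

def IsMove (B : Set ((Fin n → ℕ) × (Fin n → ℕ))) (p q : Fin n → ℕ) : Prop :=
  ∃ m ∈ B, (fun i => (p i : ℤ) - (q i : ℤ)) = (fun i => (m.1 i : ℤ) - (m.2 i : ℤ))
    ∨ (fun i => (q i : ℤ) - (p i : ℤ)) = (fun i => (m.1 i : ℤ) - (m.2 i : ℤ))

instance (B : Set ((Fin n → ℕ) × (Fin n → ℕ))) : Std.Symm (IsMove B) :=
  ⟨fun _ _ ⟨m, hm, h⟩ => ⟨m, hm, h.symm⟩⟩

theorem natCast_tsub_add {y μ ν : Fin n → ℕ} (hμ : μ ≤ y) (i : Fin n) :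
    (((y - μ + ν) i : ℕ) : ℤ) = y i - μ i + ν i := by
  simp [Nat.cast_sub (hμ i)]

theorem isMove_tsub_add {B : Set ((Fin n → ℕ) × (Fin n → ℕ))} {y μ ν : Fin n → ℕ}
    (hB : (μ, ν) ∈ B ∨ (ν, μ) ∈ B) (hμ : μ ≤ y) : IsMove B y (y - μ + ν) := by
  rcases hB with hB | hB
  · exact ⟨_, hB, .inl (funext fun i => by simp only [natCast_tsub_add hμ]; ring)⟩
  · exact ⟨_, hB, .inr (funext fun i => by simp only [natCast_tsub_add hμ]; ring)⟩

theorem mulVec_tsub_add {A : Matrix (Fin d) (Fin n) ℤ} {y μ ν : Fin n → ℕ} (hμ : μ ≤ y)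
    (hA : A *ᵥ (fun i => (μ i : ℤ)) = A *ᵥ (fun i => (ν i : ℤ))) :
    A *ᵥ (fun i => ((y - μ + ν) i : ℤ)) = A *ᵥ (fun i => (y i : ℤ)) := by
  have hcast : (fun i => ((y - μ + ν) i : ℤ))
      = (fun i => (y i : ℤ)) - (fun i => (μ i : ℤ)) + fun i => (ν i : ℤ) :=
    funext (natCast_tsub_add hμ)
  rw [hcast, mulVec_add, mulVec_sub, hA, sub_add_cancel]

theorem exists_isMove_lt_of_isGroebnerBasis {k : Type*} [Field k]
    {A : Matrix (Fin d) (Fin n) ℤ} {B : Set ((Fin n → ℕ) × (Fin n → ℕ))}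
    (hGB : IsGroebnerBasis 1 {f | ∃ m ∈ B, f = binomial k m.1 m.2} (toricIdeal k A))
    {y z : Fin n → ℕ} (hyz : A *ᵥ (fun i => (y i : ℤ)) = A *ᵥ (fun i => (z i : ℤ)))
    (hzy : toLex z < toLex y) :
    ∃ y', A *ᵥ (fun i => (y' i : ℤ)) = A *ᵥ (fun i => (y i : ℤ)) ∧ IsMove B y y' ∧
      toLex y' < toLex y := by
  obtain ⟨g, ⟨m, hmB, rfl⟩, μ, μf, hLg, hLf, hμy⟩ :=
    hGB.2 _ (binomial_mem_toricIdeal hyz) (binomial_ne_zero (toLex.injective.ne_iff.1 hzy.ne'))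
  have hμf : μf = y := by
    rcases hLf.binomial with ⟨h, -⟩ | ⟨-, hyz'⟩
    · exact h
    · exact absurd ((precW_one_iff y z).1 hyz') hzy.asymm
  subst hμf
  have hAm := mulVec_eq_of_binomial_mem_toricIdeal (hGB.1 ⟨m, hmB, rfl⟩)
  rcases hLg.binomial with ⟨rfl, h21⟩ | ⟨rfl, h12⟩
  · exact ⟨_, mulVec_tsub_add hμy hAm, isMove_tsub_add (.inl hmB) hμy,
      toLex_tsub_add_lt hμy ((precW_one_iff _ _).1 h21)⟩
  · exact ⟨_, mulVec_tsub_add hμy hAm.symm, isMove_tsub_add (.inr hmB) hμy,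
      toLex_tsub_add_lt hμy ((precW_one_iff _ _).1 h12)⟩

end Moves

theorem universal_groebner_basis_is_markov_basis_general
    (k : Type*) [Field k] (d n : ℕ) (A : Matrix (Fin d) (Fin n) ℤ)
    (B : Set ((Fin n → ℕ) × (Fin n → ℕ)))
    (hUGB : IsUniversalGroebnerBasis
      {f : MvPolynomial (Fin n) k | ∃ p ∈ B,
        f = monomial (Finsupp.equivFunOnFinite.symm p.1) 1
          - monomial (Finsupp.equivFunOnFinite.symm p.2) 1}
      (toricIdeal k A)) :
    ∀ b : Fin d → ℤ, ∀ y z : Fin n → ℕ,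
      A.mulVec (fun i => (y i : ℤ)) = b → A.mulVec (fun i => (z i : ℤ)) = b →
      Relation.ReflTransGen
        (fun p q : Fin n → ℕ =>
          A.mulVec (fun i => (p i : ℤ)) = b ∧ A.mulVec (fun i => (q i : ℤ)) = b ∧
          ∃ m ∈ B, (fun i => (p i : ℤ) - (q i : ℤ)) = (fun i => (m.1 i : ℤ) - (m.2 i : ℤ))
            ∨ (fun i => (q i : ℤ) - (p i : ℤ)) = (fun i => (m.1 i : ℤ) - (m.2 i : ℤ)))
        y z := by
  intro b y z hy hz
  have hGB := hUGB 1 precW_one_total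
  refine reflTransGen_of_forall_exists_lt (r := IsMove B)
    (S := {p | A *ᵥ (fun i => (p i : ℤ)) = b}) toLex toLex.injective.injOn ?_ hy hz
  intro y hy z hz hzy
  obtain ⟨y', hy', hmove, hlt⟩ := exists_isMove_lt_of_isGroebnerBasis hGB (hy.trans hz.symm) hzy
  exact ⟨y', hy'.trans hy, hmove, hlt⟩

/-- If `ker(A) ∩ ℕ^n = {0}` and `B` encodes a universal Gröbner basis of `I_A`, then the
moves `{u - v : (u,v) ∈ B}` form a Markov basis: for every `b`, any two points of the
fiber `P(b) = {x ∈ ℕ^n : A·x = b}` are connected by a path of `±(u-v)`-moves staying in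
the fiber. -/
theorem universal_groebner_basis_is_markov_basis
    (k : Type*) [Field k] (d n : ℕ) (A : Matrix (Fin d) (Fin n) ℤ)
    (hker : ∀ u : Fin n → ℕ, A.mulVec (fun i => (u i : ℤ)) = 0 → u = 0)
    (B : Set ((Fin n → ℕ) × (Fin n → ℕ)))
    (hUGB : IsUniversalGroebnerBasis
      {f : MvPolynomial (Fin n) k | ∃ p ∈ B,
        f = monomial (Finsupp.equivFunOnFinite.symm p.1) 1
          - monomial (Finsupp.equivFunOnFinite.symm p.2) 1}
      (toricIdeal k A)) :
    ∀ b : Fin d → ℤ, ∀ y z : Fin n → ℕ,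
      A.mulVec (fun i => (y i : ℤ)) = b → A.mulVec (fun i => (z i : ℤ)) = b →
      Relation.ReflTransGen
        (fun p q : Fin n → ℕ =>
          A.mulVec (fun i => (p i : ℤ)) = b ∧ A.mulVec (fun i => (q i : ℤ)) = b ∧
          ∃ m ∈ B, (fun i => (p i : ℤ) - (q i : ℤ)) = (fun i => (m.1 i : ℤ) - (m.2 i : ℤ))
            ∨ (fun i => (q i : ℤ) - (p i : ℤ)) = (fun i => (m.1 i : ℤ) - (m.2 i : ℤ)))
        y z :=
  universal_groebner_basis_is_markov_basis_general k d n A B hUGB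
end
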